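/- arXiv:2504.09928 — 2 statements merged into one kernel-verified Lean document; each statement's English description precedes it below -/
import Mathlib

section
/- Let α > 0 and let f ∈ B₁(α) with logarithmic coefficients γ₁, γ₂. Then |γ₂| − |γ₁| ≥ −1/√((α+1)² + 1). -/
open Complex Metric

/-- The Bazilevič class `B₁(α)`: `f` is analytic on the unit disk with `f 0 = 0`,
`f' 0 = 1`, and `Re[(f z / z)^(α-1) * f' z] > 0` on the disk, where the power is taken
with the analytic branch equal to `1` at `z = 0`.  The branch is encoded via an analytic
function `h` with `h 0 = 0` and `f z = z * exp (h z)` on the disk (so that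
`h = log (f z / z)` and `(f z / z)^(α-1) = exp ((α-1) * h z)`). -/
def BazilevicB1 (α : ℝ) (f h : ℂ → ℂ) : Prop :=
  AnalyticOnNhd ℂ f (ball 0 1) ∧ AnalyticOnNhd ℂ h (ball 0 1) ∧
  f 0 = 0 ∧ deriv f 0 = 1 ∧ h 0 = 0 ∧
  (∀ z ∈ ball (0 : ℂ) 1, f z = z * Complex.exp (h z)) ∧
  (∀ z ∈ ball (0 : ℂ) 1, 0 < (Complex.exp ((α - 1 : ℂ) * h z) * deriv f z).re)

/-- The first logarithmic coefficient `γ₁`, from `h = log (f z / z) = 2 ∑ γₙ zⁿ`. -/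
noncomputable def logCoeff1 (h : ℂ → ℂ) : ℂ := deriv h 0 / 2

/-- The second logarithmic coefficient `γ₂`, from `h = log (f z / z) = 2 ∑ γₙ zⁿ`. -/
noncomputable def logCoeff2 (h : ℂ → ℂ) : ℂ := iteratedDeriv 2 h 0 / 4

/-- The second Taylor coefficient `a₂` of `f`. -/
noncomputable def coeff2 (f : ℂ → ℂ) : ℂ := iteratedDeriv 2 f 0 / 2

/-- The third Taylor coefficient `a₃` of `f`. -/
noncomputable def coeff3 (f : ℂ → ℂ) : ℂ := iteratedDeriv 3 f 0 / 6

/-!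
Put `h = log (f z / z)`. The function `p = (f z / z) ^ (α - 1) * f' z = exp (α h) (1 + z h')`
has positive real part and `p 0 = 1`, so `p = (1 + z ψ) / (1 - z ψ)` with `ψ` mapping the disk
into the closed disk. The Schwarz–Pick inequality `|ψ'(0)| ≤ 1 - |ψ(0)|²` then reads
`|(α + 2) γ₂ - γ₁²| ≤ 1 - (α + 1)² |γ₁|²`, whence `(α + 2) |γ₂| ≥ ((α + 1)² + 1) |γ₁|² - 1`.
Minimising `|γ₂| - |γ₁|` under this constraint and `|γ₂| ≥ 0` gives the bound, attained at
`|γ₁| = 1 / √((α + 1)² + 1)`, `γ₂ = 0`.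
-/

open ComplexConjugate Set Filter Topology

section SecondDerivative

variable {𝕜 : Type*} [NontriviallyNormedField 𝕜] {f g : 𝕜 → 𝕜} {x : 𝕜}

lemma iteratedDeriv_two_fun_mul (hf : ContDiffAt 𝕜 2 f x) (hg : ContDiffAt 𝕜 2 g x) :
    iteratedDeriv 2 (fun z => f z * g z) x =
      iteratedDeriv 2 f x * g x + 2 * deriv f x * deriv g x + f x * iteratedDeriv 2 g x := by
  rw [iteratedDeriv_fun_mul hf hg]
  simp only [Finset.sum_range_succ, Finset.range_one, Finset.sum_singleton, Nat.choose_zero_right,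
    Nat.choose_succ_self_right, Nat.choose_self, Nat.cast_one, Nat.cast_ofNat, iteratedDeriv_zero,
    iteratedDeriv_one, Nat.reduceAdd, tsub_zero, Nat.add_one_sub_one, tsub_self]
  ring

lemma iteratedDeriv_two_id_mul (hg : ContDiffAt 𝕜 2 g x) :
    iteratedDeriv 2 (fun z => z * g z) x = 2 * deriv g x + x * iteratedDeriv 2 g x := by
  rw [iteratedDeriv_two_fun_mul contDiffAt_fun_id hg]
  simp [iteratedDeriv_fun_id]

lemma deriv_id_mul (hg : DifferentiableAt 𝕜 g x) :
    deriv (fun z => z * g z) x = g x + x * deriv g x := by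
  simp [deriv_fun_mul differentiableAt_fun_id hg]

end SecondDerivative

lemma iteratedDeriv_two_cexp {u : ℂ → ℂ} {x : ℂ} (hu : AnalyticAt ℂ u x) :
    iteratedDeriv 2 (fun z => exp (u z)) x =
      exp (u x) * (iteratedDeriv 2 u x + deriv u x ^ 2) := by
  have hderiv : deriv (fun z => exp (u z)) =ᶠ[𝓝 x] fun z => exp (u z) * deriv u z := by
    filter_upwards [hu.eventually_analyticAt] with z hz
    exact (hz.differentiableAt.hasDerivAt.cexp).deriv
  rw [iteratedDeriv_succ', iteratedDeriv_one, hderiv.deriv_eq, iteratedDeriv_succ',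
    iteratedDeriv_one, deriv_fun_mul hu.differentiableAt.cexp hu.deriv.differentiableAt,
    hu.differentiableAt.hasDerivAt.cexp.deriv]
  ring

lemma normSq_one_sub_conj_mul_sub_normSq_sub (a w : ℂ) :
    normSq (1 - conj a * w) - normSq (w - a) = (1 - normSq a) * (1 - normSq w) := by
  simp only [normSq_apply, sub_re, sub_im, mul_re, mul_im, conj_re, conj_im, one_re, one_im]
  ring

lemma one_sub_conj_mul_ne_zero {a w : ℂ} (ha : ‖a‖ < 1) (hw : ‖w‖ ≤ 1) :
    1 - conj a * w ≠ 0 := by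
  intro h0
  have : ‖conj a * w‖ < 1 := by
    rw [norm_mul, norm_conj]
    nlinarith [norm_nonneg a, norm_nonneg w]
  rw [← sub_eq_zero.mp h0, norm_one] at this
  exact this.false

lemma norm_sub_div_one_sub_conj_mul_le_one {a w : ℂ} (ha : ‖a‖ < 1) (hw : ‖w‖ ≤ 1) :
    ‖(w - a) / (1 - conj a * w)‖ ≤ 1 := by
  have hden := one_sub_conj_mul_ne_zero ha hw
  rw [norm_div, div_le_one (norm_pos_iff.mpr hden), ← sq_le_sq₀ (norm_nonneg _) (norm_nonneg _),
    Complex.sq_norm, Complex.sq_norm, ← sub_nonneg, normSq_one_sub_conj_mul_sub_normSq_sub,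
    ← Complex.sq_norm, ← Complex.sq_norm]
  exact mul_nonneg (by nlinarith [norm_nonneg a]) (by nlinarith [norm_nonneg w])

theorem norm_deriv_le_one_sub_sq {ψ : ℂ → ℂ} (hd : DifferentiableOn ℂ ψ (ball 0 1))
    (hmaps : MapsTo ψ (ball 0 1) (closedBall 0 1)) : ‖deriv ψ 0‖ ≤ 1 - ‖ψ 0‖ ^ 2 := by
  have hball : ball (0 : ℂ) 1 ∈ 𝓝 0 := ball_mem_nhds 0 one_pos
  have hbound : ∀ z ∈ ball (0 : ℂ) 1, ‖ψ z‖ ≤ 1 := fun z hz => by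
    simpa using hmaps hz
  rcases (hbound 0 (mem_ball_self one_pos)).lt_or_eq with ha | ha
  · set a := ψ 0 with ha_def
    set g : ℂ → ℂ := fun z => (ψ z - a) / (1 - conj a * ψ z)
    have hden : ∀ z ∈ ball (0 : ℂ) 1, 1 - conj a * ψ z ≠ 0 := fun z hz =>
      one_sub_conj_mul_ne_zero ha (hbound z hz)
    have hg : DifferentiableOn ℂ g (ball 0 1) :=
      (hd.sub_const a).div ((differentiableOn_const 1).sub (hd.const_mul _)) hden
    have hgmaps : MapsTo g (ball 0 1) (closedBall (g 0) 1) := fun z hz => by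
      simpa [g, a] using norm_sub_div_one_sub_conj_mul_le_one ha (hbound z hz)
    have hnorm : (1 : ℂ) - conj a * a = ((1 - ‖a‖ ^ 2 : ℝ) : ℂ) := by
      push_cast [conj_mul']; rfl
    have hpos : 0 < 1 - ‖a‖ ^ 2 := by nlinarith [norm_nonneg a]
    have hψ' : HasDerivAt ψ (deriv ψ 0) 0 := (hd.differentiableAt hball).hasDerivAt
    have hg' : HasDerivAt g (deriv ψ 0 / (1 - ‖a‖ ^ 2 : ℝ)) 0 := by
      refine ((hψ'.sub_const a).div ((hψ'.const_mul (conj a)).const_sub 1)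
        (hden 0 (mem_ball_self one_pos))).congr_deriv ?_
      rw [← ha_def, sub_self, zero_mul, sub_zero, ← hnorm]
      field_simp [hden 0 (mem_ball_self one_pos)]
    have := norm_deriv_le_div_of_mapsTo_ball hg hgmaps one_pos
    rwa [hg'.deriv, norm_div, norm_real, Real.norm_of_nonneg hpos.le, div_one,
      div_le_one hpos] at this
  · have hmax : IsLocalMax (norm ∘ ψ) 0 :=
      Filter.mem_of_superset hball fun z hz => by simpa [ha] using hbound z hz
    have hconst : ψ =ᶠ[𝓝 0] fun _ => ψ 0 :=
      Complex.eventually_eq_of_isLocalMax_norm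
        (Filter.mem_of_superset hball fun z hz => hd.differentiableAt (isOpen_ball.mem_nhds hz))
        hmax
    rw [hconst.deriv_eq, ha]
    simp

lemma norm_sub_one_lt_norm_add_one {w : ℂ} (hw : 0 < w.re) : ‖w - 1‖ < ‖w + 1‖ := by
  rw [← sq_lt_sq₀ (norm_nonneg _) (norm_nonneg _), Complex.sq_norm, Complex.sq_norm]
  simp only [normSq_apply, sub_re, sub_im, add_re, add_im, one_re, one_im]
  nlinarith

/-- Carathéodory's second-coefficient bound `|p₂ - p₁²/2| ≤ 2 - |p₁|²/2` for
`q = 1 + p₁ z + p₂ z² + ⋯` with positive real part. -/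
theorem norm_iteratedDeriv_two_sub_deriv_sq_le {q : ℂ → ℂ} (hd : DifferentiableOn ℂ q (ball 0 1))
    (hre : ∀ z ∈ ball (0 : ℂ) 1, 0 < (q z).re) (hq0 : q 0 = 1) :
    ‖iteratedDeriv 2 q 0 - deriv q 0 ^ 2‖ ≤ 4 - ‖deriv q 0‖ ^ 2 := by
  have hball : ball (0 : ℂ) 1 ∈ 𝓝 0 := ball_mem_nhds 0 one_pos
  have hq1 : ∀ z ∈ ball (0 : ℂ) 1, 1 + q z ≠ 0 := fun z hz h0 => by
    have := hre z hz
    rw [eq_neg_of_add_eq_zero_right h0] at this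
    norm_num at this
  set ω : ℂ → ℂ := fun z => (q z - 1) / (1 + q z)
  have hω : DifferentiableOn ℂ ω (ball 0 1) := (hd.sub_const 1).div (hd.const_add 1) hq1
  have hωmaps : MapsTo ω (ball 0 1) (closedBall (ω 0) 1) := fun z hz => by
    rw [mem_closedBall, dist_eq_norm]
    simp only [ω, hq0, sub_self, zero_div, sub_zero, norm_div]
    exact div_le_one_of_le₀ (add_comm (q z) 1 ▸ (norm_sub_one_lt_norm_add_one (hre z hz)).le)
      (norm_nonneg _)
  set ψ := dslope ω 0
  have hψ : DifferentiableOn ℂ ψ (ball 0 1) := (Complex.differentiableOn_dslope hball).mpr hω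
  have hψmaps : MapsTo ψ (ball 0 1) (closedBall 0 1) := fun z hz => by
    simpa using Complex.norm_dslope_le_div_of_mapsTo_ball hω hωmaps hz
  -- `q = (1 + z ψ) / (1 - z ψ)`, cleared of denominators
  have hrel : q =ᶠ[𝓝 0] fun z => 1 + z * ψ z * (1 + q z) := by
    filter_upwards [hball] with z hz
    have h := sub_smul_dslope ω 0 z
    simp only [sub_zero, smul_eq_mul, ω, hq0, sub_self, zero_div] at h
    rw [h, div_mul_cancel₀ _ (hq1 z hz)]
    ring
  have hψa : AnalyticAt ℂ ψ 0 := hψ.analyticAt hball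
  have hqa : AnalyticAt ℂ q 0 := hd.analyticAt hball
  have hzψ : ContDiffAt ℂ 2 (fun z => z * ψ z) 0 := contDiffAt_fun_id.mul hψa.contDiffAt
  have hq' : deriv q 0 = 2 * ψ 0 := by
    rw [hrel.deriv_eq, deriv_const_add', deriv_fun_mul (hzψ.differentiableAt two_ne_zero)
      (hqa.differentiableAt.const_add 1), deriv_id_mul hψa.differentiableAt, hq0]
    ring
  have hq'' : iteratedDeriv 2 q 0 = 4 * deriv ψ 0 + 2 * ψ 0 * deriv q 0 := by
    rw [hrel.iteratedDeriv_eq, iteratedDeriv_const_add two_pos,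
      iteratedDeriv_two_fun_mul hzψ (contDiffAt_const.add hqa.contDiffAt),
      iteratedDeriv_two_id_mul hψa.contDiffAt,
      deriv_id_mul hψa.differentiableAt, iteratedDeriv_const_add two_pos, deriv_const_add', hq0]
    ring
  have hSP := norm_deriv_le_one_sub_sq hψ hψmaps
  have hfour : iteratedDeriv 2 q 0 - deriv q 0 ^ 2 = 4 * deriv ψ 0 := by
    rw [hq'', hq']; ring
  rw [hfour, hq', norm_mul, norm_mul, RCLike.norm_ofNat, RCLike.norm_ofNat]
  nlinarith

/-- For `f z = z * exp (h z)` this is `(f z / z) ^ (α - 1) * f' z`. -/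
noncomputable def bazilevicP (α : ℂ) (h : ℂ → ℂ) (z : ℂ) : ℂ :=
  exp (α * h z) * (1 + z * deriv h z)

section bazilevicP

variable {α : ℂ} {h : ℂ → ℂ}

lemma bazilevicP_zero (hh0 : h 0 = 0) : bazilevicP α h 0 = 1 := by
  simp [bazilevicP, hh0]

lemma deriv_bazilevicP_zero (hh : AnalyticAt ℂ h 0) (hh0 : h 0 = 0) :
    deriv (bazilevicP α h) 0 = (α + 1) * deriv h 0 := by
  have hE : HasDerivAt (fun z => exp (α * h z)) (exp (α * h 0) * (α * deriv h 0)) 0 :=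
    (hh.differentiableAt.hasDerivAt.const_mul α).cexp
  have hG : HasDerivAt (fun z => 1 + z * deriv h z) (deriv h 0) 0 := by
    simpa using ((hasDerivAt_id 0).mul hh.deriv.differentiableAt.hasDerivAt).const_add 1
  unfold bazilevicP
  rw [(hE.fun_mul hG).deriv, hh0]
  simp only [mul_zero, exp_zero, one_mul, zero_mul, add_zero, mul_one]
  ring

lemma iteratedDeriv_two_bazilevicP_zero (hh : AnalyticAt ℂ h 0) (hh0 : h 0 = 0) :
    iteratedDeriv 2 (bazilevicP α h) 0 =
      (α + 2) * iteratedDeriv 2 h 0 + α * (α + 2) * deriv h 0 ^ 2 := by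
  have hαh : AnalyticAt ℂ (fun z => α * h z) 0 := analyticAt_const.fun_mul hh
  have hE : AnalyticAt ℂ (fun z => exp (α * h z)) 0 := hαh.cexp
  have hG : AnalyticAt ℂ (fun z => 1 + z * deriv h z) 0 :=
    analyticAt_const.fun_add (analyticAt_id.fun_mul hh.deriv)
  have hh2 : iteratedDeriv 2 h 0 = deriv (deriv h) 0 := by
    rw [iteratedDeriv_succ', iteratedDeriv_one]
  unfold bazilevicP
  rw [iteratedDeriv_two_fun_mul hE.contDiffAt hG.contDiffAt,
    iteratedDeriv_two_cexp hαh, iteratedDeriv_const_mul_field,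
    deriv_const_mul_field', iteratedDeriv_const_add two_pos,
    iteratedDeriv_two_id_mul hh.deriv.contDiffAt, deriv_const_add',
    deriv_id_mul hh.deriv.differentiableAt, (hh.differentiableAt.hasDerivAt.const_mul α).cexp.deriv,
    hh0, hh2]
  simp only [mul_zero, exp_zero, one_mul, zero_mul, add_zero, mul_one]
  ring

end bazilevicP

namespace BazilevicB1

variable {α : ℝ} {f h : ℂ → ℂ}

lemma deriv_eq (hf : BazilevicB1 α f h) {z : ℂ} (hz : z ∈ ball (0 : ℂ) 1) :
    deriv f z = exp (h z) * (1 + z * deriv h z) := by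
  obtain ⟨-, hh, -, -, -, hfh, -⟩ := hf
  have hfz : f =ᶠ[𝓝 z] fun w => w * exp (h w) :=
    eventually_of_mem (isOpen_ball.mem_nhds hz) hfh
  have hexp := (hh z hz).differentiableAt.hasDerivAt.cexp
  rw [hfz.deriv_eq, deriv_id_mul hexp.differentiableAt, hexp.deriv]
  ring

lemma re_bazilevicP_pos (hf : BazilevicB1 α f h) {z : ℂ} (hz : z ∈ ball (0 : ℂ) 1) :
    0 < (bazilevicP α h z).re := by
  have hderiv := hf.deriv_eq hz
  obtain ⟨-, -, -, -, -, -, hpos⟩ := hf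
  have hpos := hpos z hz
  rwa [hderiv, ← mul_assoc, ← Complex.exp_add, show (α - 1 : ℂ) * h z + h z = α * h z by
    ring] at hpos

lemma norm_mul_logCoeff2_sub_sq_le (hf : BazilevicB1 α f h) :
    ‖(α + 2 : ℂ) * logCoeff2 h - logCoeff1 h ^ 2‖ ≤ 1 - (α + 1) ^ 2 * ‖logCoeff1 h‖ ^ 2 := by
  have hre : ∀ z ∈ ball (0 : ℂ) 1, 0 < (bazilevicP α h z).re := fun z hz =>
    hf.re_bazilevicP_pos hz
  obtain ⟨-, hh, -, -, hh0, -, -⟩ := hf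
  have hh0a := hh 0 (mem_ball_self one_pos)
  have hP : DifferentiableOn ℂ (bazilevicP α h) (ball 0 1) :=
    (hh.differentiableOn.const_mul _).cexp.mul
      ((differentiableOn_const 1).add (differentiableOn_id.mul hh.deriv.differentiableOn))
  have hcar := norm_iteratedDeriv_two_sub_deriv_sq_le hP hre (bazilevicP_zero hh0)
  have hγ₁ : deriv h 0 = 2 * logCoeff1 h := by simp only [logCoeff1]; ring
  have hγ₂ : iteratedDeriv 2 h 0 = 4 * logCoeff2 h := by simp only [logCoeff2]; ring
  rw [deriv_bazilevicP_zero hh0a hh0, iteratedDeriv_two_bazilevicP_zero hh0a hh0, hγ₁, hγ₂,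
    show ((α : ℂ) + 2) * (4 * logCoeff2 h) + α * (α + 2) * (2 * logCoeff1 h) ^ 2
      - ((α + 1) * (2 * logCoeff1 h)) ^ 2 = 4 * ((α + 2 : ℂ) * logCoeff2 h - logCoeff1 h ^ 2) by
      ring] at hcar
  have hα1 : ‖(α + 1 : ℂ)‖ ^ 2 = (α + 1) ^ 2 := by
    rw [← ofReal_one, ← ofReal_add, norm_real, Real.norm_eq_abs, sq_abs]
  rw [norm_mul, norm_mul, norm_mul, mul_pow, mul_pow, hα1, RCLike.norm_ofNat,
    RCLike.norm_ofNat] at hcar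
  linarith

end BazilevicB1

lemma neg_one_div_le_sub_of_sq_mul_sq_sub_one_le_mul {r c s t : ℝ} (hr : 0 < r) (hc : 0 < c)
    (hcr : c ≤ 2 * r) (hs : 0 ≤ s) (h : r ^ 2 * t ^ 2 - 1 ≤ c * s) :
    -1 / r ≤ s - t := by
  rw [div_le_iff₀ hr]
  rcases le_or_gt (r * t) 1 with hrt | hrt
  · nlinarith [mul_nonneg hr.le hs]
  · -- `c (r s - r t + 1) ≥ r (r²t² - 1) - c (r t - 1) = (r t - 1) (r (r t + 1) - c)`
    have hprod : 0 ≤ (r * t - 1) * (r * (r * t + 1) - c) :=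
      mul_nonneg (by linarith) (by nlinarith)
    have hcX : 0 ≤ c * (r * s - r * t + 1) := by nlinarith [mul_le_mul_of_nonneg_left h hr.le]
    nlinarith [(mul_nonneg_iff_of_pos_left hc).mp hcX]

/-- For `α > 0` and `f ∈ B₁(α)` with logarithmic coefficients `γ₁, γ₂`:
`|γ₂| - |γ₁| ≥ -1/√((α+1)² + 1)`. -/
theorem stmt_2 (α : ℝ) (hα : 0 < α) (f h : ℂ → ℂ) (hf : BazilevicB1 α f h) :
    ‖logCoeff2 h‖ - ‖logCoeff1 h‖ ≥
      -1 / Real.sqrt ((α + 1) ^ 2 + 1) := by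
  have hA : 0 < (α + 1) ^ 2 + 1 := by positivity
  have hr := Real.sqrt_pos.mpr hA
  have hr2 := Real.sq_sqrt hA.le
  have hα2 : ‖(α + 2 : ℂ)‖ = α + 2 := by
    rw [show (α + 2 : ℂ) = ((α + 2 : ℝ) : ℂ) by push_cast; rfl, norm_real,
      Real.norm_of_nonneg (by linarith)]
  have hkey := hf.norm_mul_logCoeff2_sub_sq_le
  have htri := norm_sub_norm_le (logCoeff1 h ^ 2) ((α + 2 : ℂ) * logCoeff2 h)
  rw [norm_sub_rev, norm_pow, norm_mul, hα2] at htri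
  have hcr : α + 2 ≤ 2 * Real.sqrt ((α + 1) ^ 2 + 1) := by
    nlinarith [sq_nonneg (2 * Real.sqrt ((α + 1) ^ 2 + 1) - (α + 2))]
  exact neg_one_div_le_sub_of_sq_mul_sq_sub_one_le_mul hr (by linarith) hcr (norm_nonneg _)
    (by rw [hr2]; linarith)
end

section
/- Let α > 0 and let f ∈ B₁(α) with logarithmic coefficients γ₁, γ₂ and Taylor coefficients a₂, a₃. Then the stronger estimate |γ₂| − |γ₁| ≤ 1/(α+2) − (α/4)|a₂|² − (1/2)|a₂| holds. -/
open Complex Metric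

/-! With `h = log (f z / z)`, the function `p = (f z / z) ^ (α - 1) * f' = exp (α h) (1 + z h')`
has positive real part and `p 0 = 1`. For such `p`, the Schwarz–Pick lemma applied to `ω z / z`,
where `ω = (p - 1) / (p + 1)`, gives `|p''(0) - p'(0)²| ≤ 4 - |p'(0)|²`. Here `p'(0) = (α + 1) a₂`
and `p''(0) - p'(0)² = (α + 2) h''(0) - a₂²` with `h''(0) = 4 γ₂`, so the triangle inequality
yields `(α + 2) |4 γ₂| ≤ 4 - α (α + 2) |a₂|²`; the claim follows since `|γ₁| = |a₂| / 2`. -/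

open Set Filter ComplexConjugate
open scoped Topology

theorem iteratedDeriv_two {𝕜 F : Type*} [NontriviallyNormedField 𝕜] [NormedAddCommGroup F]
    [NormedSpace 𝕜 F] (f : 𝕜 → F) : iteratedDeriv 2 f = deriv (deriv f) := by
  rw [iteratedDeriv_succ, iteratedDeriv_one]

theorem iteratedDeriv_two_eq_of_hasDerivAt {𝕜 F : Type*} [NontriviallyNormedField 𝕜]
    [NormedAddCommGroup F] [NormedSpace 𝕜 F] {f f' : 𝕜 → F} {x : 𝕜} {c : F}
    (hf : ∀ᶠ y in 𝓝 x, HasDerivAt f (f' y) y) (hf' : HasDerivAt f' c x) :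
    iteratedDeriv 2 f x = c := by
  rw [iteratedDeriv_two, EventuallyEq.deriv_eq (hf.mono fun _ hy => hy.deriv), hf'.deriv]

namespace Complex

theorem norm_sub_le_norm_one_sub_conj_mul {a w : ℂ} (ha : ‖a‖ ≤ 1) (hw : ‖w‖ ≤ 1) :
    ‖w - a‖ ≤ ‖1 - conj a * w‖ := by
  have key : normSq (1 - conj a * w) - normSq (w - a) = (1 - normSq a) * (1 - normSq w) := by
    simp only [normSq_apply, sub_re, sub_im, mul_re, mul_im, one_re, one_im, conj_re, conj_im]
    ring
  rw [← sq_le_sq₀ (norm_nonneg _) (norm_nonneg _), Complex.sq_norm, Complex.sq_norm]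
  have ha' : normSq a ≤ 1 := by rw [← Complex.sq_norm]; nlinarith [norm_nonneg a]
  have hw' : normSq w ≤ 1 := by rw [← Complex.sq_norm]; nlinarith [norm_nonneg w]
  nlinarith [mul_nonneg (sub_nonneg.2 ha') (sub_nonneg.2 hw')]

theorem norm_sub_one_le_norm_add_one {w : ℂ} (hw : 0 ≤ w.re) : ‖w - 1‖ ≤ ‖w + 1‖ := by
  have key : normSq (w + 1) - normSq (w - 1) = 4 * w.re := by
    simp only [normSq_apply, add_re, add_im, sub_re, sub_im, one_re, one_im]
    ring
  rw [← sq_le_sq₀ (norm_nonneg _) (norm_nonneg _), Complex.sq_norm, Complex.sq_norm]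
  linarith

/-- **Schwarz–Pick lemma** at the origin. -/
theorem norm_deriv_le_one_sub_sq_of_mapsTo_closedBall {φ : ℂ → ℂ}
    (hd : DifferentiableOn ℂ φ (ball 0 1)) (hφ : MapsTo φ (ball 0 1) (closedBall 0 1)) :
    ‖deriv φ 0‖ ≤ 1 - ‖φ 0‖ ^ 2 := by
  have h0 : (0 : ℂ) ∈ ball (0 : ℂ) 1 := mem_ball_self one_pos
  have hbound : ∀ z ∈ ball (0 : ℂ) 1, ‖φ z‖ ≤ 1 := fun z hz => mem_closedBall_zero_iff.1 (hφ hz)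
  rcases (hbound 0 h0).eq_or_lt with ha | ha
  · have hmax : IsLocalMax (norm ∘ φ) 0 := by
      filter_upwards [isOpen_ball.mem_nhds h0] with z hz
      simpa [ha] using hbound z hz
    have hdiff : ∀ᶠ z in 𝓝 (0 : ℂ), DifferentiableAt ℂ φ z := by
      filter_upwards [isOpen_ball.mem_nhds h0] with z hz
      exact hd.differentiableAt (isOpen_ball.mem_nhds hz)
    rw [EventuallyEq.deriv_eq (eventually_eq_of_isLocalMax_norm hdiff hmax), deriv_const,
      norm_zero, ha]
    norm_num
  -- Otherwise compose with the disc automorphism sending `φ 0` to `0` and apply Schwarz.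
  set a := φ 0 with ha_def
  have hden : ∀ z ∈ ball (0 : ℂ) 1, 1 - conj a * φ z ≠ 0 := by
    intro z hz h1
    have : ‖conj a * φ z‖ < 1 := by
      rw [norm_mul, RCLike.norm_conj]
      nlinarith [hbound z hz, norm_nonneg a, norm_nonneg (φ z)]
    rw [← sub_eq_zero.1 h1, norm_one] at this
    exact lt_irrefl _ this
  set ψ : ℂ → ℂ := fun z => (φ z - a) / (1 - conj a * φ z)
  have hψd : DifferentiableOn ℂ ψ (ball 0 1) :=
    (hd.sub_const a).div ((differentiableOn_const 1).sub (hd.const_mul _)) hden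
  have hψ : MapsTo ψ (ball 0 1) (closedBall (ψ 0) 1) := by
    intro z hz
    rw [show ψ 0 = 0 by simp [ψ, ← ha_def], mem_closedBall_zero_iff, norm_div,
      div_le_one (norm_pos_iff.2 (hden z hz))]
    exact norm_sub_le_norm_one_sub_conj_mul ha.le (hbound z hz)
  have hψ' : deriv ψ 0 = deriv φ 0 / (1 - conj a * a) := by
    have hφ' := (hd.differentiableAt (isOpen_ball.mem_nhds h0)).hasDerivAt
    have hψ'' : HasDerivAt ψ _ 0 :=
      (hφ'.sub_const a).div ((hφ'.const_mul (conj a)).const_sub 1) (hden 0 h0)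
    have hD : 1 - conj a * a ≠ 0 := hden 0 h0
    rw [hψ''.deriv, ← ha_def]
    field_simp
    ring
  have hpos : 0 < 1 - ‖a‖ ^ 2 := by nlinarith [norm_nonneg a]
  have hnorm : ‖1 - conj a * a‖ = 1 - ‖a‖ ^ 2 := by
    rw [conj_mul', ← ofReal_pow, ← ofReal_one, ← ofReal_sub, norm_real,
      Real.norm_of_nonneg hpos.le]
  have := norm_deriv_le_one_of_mapsTo_ball hψd hψ one_pos
  rwa [hψ', norm_div, hnorm, div_le_one hpos] at this

theorem norm_iteratedDeriv_two_le_of_mapsTo_closedBall {ω : ℂ → ℂ}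
    (hd : DifferentiableOn ℂ ω (ball 0 1)) (hω : MapsTo ω (ball 0 1) (closedBall 0 1))
    (h0 : ω 0 = 0) : ‖iteratedDeriv 2 ω 0‖ ≤ 2 * (1 - ‖deriv ω 0‖ ^ 2) := by
  set φ := dslope ω 0
  have hφd : DifferentiableOn ℂ φ (ball 0 1) :=
    (differentiableOn_dslope (ball_mem_nhds 0 one_pos)).2 hd
  have hφ : MapsTo φ (ball 0 1) (closedBall 0 1) := fun z hz => by
    simpa using norm_dslope_le_div_of_mapsTo_ball hd (by rwa [h0]) hz
  have hφa : AnalyticAt ℂ φ 0 := hφd.analyticOnNhd isOpen_ball 0 (mem_ball_self one_pos)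
  have hω_eq : ω = fun z => z * φ z :=
    funext fun z => by simpa [h0] using (sub_smul_dslope ω 0 z).symm
  have hω2 : iteratedDeriv 2 ω 0 = 2 * deriv φ 0 := by
    refine iteratedDeriv_two_eq_of_hasDerivAt (f' := fun z => φ z + z * deriv φ z) ?_ ?_
    · filter_upwards [hφa.eventually_analyticAt] with z hz
      rw [hω_eq]
      refine ((hasDerivAt_id z).fun_mul hz.differentiableAt.hasDerivAt).congr_deriv ?_
      simp
    · refine (hφa.differentiableAt.hasDerivAt.add
        ((hasDerivAt_id 0).fun_mul hφa.deriv.differentiableAt.hasDerivAt)).congr_deriv ?_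
      simp only [zero_mul]
      ring
  rw [hω2, norm_mul, Complex.norm_two, ← dslope_same ω 0]
  linarith [norm_deriv_le_one_sub_sq_of_mapsTo_closedBall hφd hφ]

/-- The second-coefficient bound `|p₂ - p₁² / 2| ≤ 2 - |p₁|² / 2` for a Carathéodory function
`p = 1 + p₁ z + p₂ z² + ⋯`. -/
theorem norm_iteratedDeriv_two_sub_sq_le_of_re_pos {p : ℂ → ℂ}
    (hd : DifferentiableOn ℂ p (ball 0 1)) (h0 : p 0 = 1)
    (hre : ∀ z ∈ ball (0 : ℂ) 1, 0 < (p z).re) :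
    ‖iteratedDeriv 2 p 0 - deriv p 0 ^ 2‖ ≤ 4 - ‖deriv p 0‖ ^ 2 := by
  have hden : ∀ z ∈ ball (0 : ℂ) 1, p z + 1 ≠ 0 := fun z hz h => by
    have := hre z hz
    rw [eq_neg_of_add_eq_zero_left h] at this
    norm_num at this
  set ω : ℂ → ℂ := fun z => (p z - 1) / (p z + 1)
  have hωd : DifferentiableOn ℂ ω (ball 0 1) := (hd.sub_const 1).div (hd.add_const 1) hden
  have hω : MapsTo ω (ball 0 1) (closedBall 0 1) := fun z hz => by
    rw [mem_closedBall_zero_iff, norm_div, div_le_one (norm_pos_iff.2 (hden z hz))]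
    exact norm_sub_one_le_norm_add_one (hre z hz).le
  have hpa : AnalyticOnNhd ℂ p (ball 0 1) := hd.analyticOnNhd isOpen_ball
  have h0' : (0 : ℂ) ∈ ball (0 : ℂ) 1 := mem_ball_self one_pos
  have hω' : ∀ z ∈ ball (0 : ℂ) 1, HasDerivAt ω (2 * deriv p z / (p z + 1) ^ 2) z := by
    intro z hz
    have hp := (hpa z hz).differentiableAt.hasDerivAt
    refine ((hp.sub_const 1).fun_div (hp.add_const 1) (hden z hz)).congr_deriv ?_
    ring
  have hω'0 : deriv ω 0 = deriv p 0 / 2 := by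
    rw [(hω' 0 h0').deriv, h0]
    ring
  have hω''0 : iteratedDeriv 2 ω 0 = (iteratedDeriv 2 p 0 - deriv p 0 ^ 2) / 2 := by
    refine iteratedDeriv_two_eq_of_hasDerivAt
      (eventually_of_mem (isOpen_ball.mem_nhds h0') hω') ?_
    have hp := (hpa 0 h0').differentiableAt.hasDerivAt
    have hp' := (hpa 0 h0').deriv.differentiableAt.hasDerivAt
    refine ((hp'.const_mul 2).fun_div ((hp.add_const 1).fun_pow 2) (by simp [h0])).congr_deriv ?_
    rw [iteratedDeriv_two, h0]
    ring
  have := norm_iteratedDeriv_two_le_of_mapsTo_closedBall hωd hω (by simp [ω, h0])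
  rw [hω''0, hω'0, norm_div, norm_div, Complex.norm_two] at this
  linarith

end Complex

/-- `(f z / z) ^ (β - 1) * f' z` for `f z = z * exp (h z)`; for `β = 1` this is `f' z`. -/
noncomputable def bazilevicFun (β : ℂ) (h : ℂ → ℂ) (z : ℂ) : ℂ :=
  exp (β * h z) * (1 + z * deriv h z)

section bazilevicFun

variable {β : ℂ} {h : ℂ → ℂ}

theorem bazilevicFun_zero (h0 : h 0 = 0) : bazilevicFun β h 0 = 1 := by
  simp [bazilevicFun, h0]

theorem hasDerivAt_bazilevicFun {z : ℂ} (hh : AnalyticAt ℂ h z) :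
    HasDerivAt (bazilevicFun β h)
      (exp (β * h z) * (β * deriv h z * (1 + z * deriv h z) + deriv h z + z * deriv (deriv h) z))
      z := by
  have hE := (hh.differentiableAt.hasDerivAt.const_mul β).cexp
  have hu := ((hasDerivAt_id z).fun_mul hh.deriv.differentiableAt.hasDerivAt).const_add 1
  refine (hE.fun_mul hu).congr_deriv ?_
  simp only [id]
  ring

theorem deriv_bazilevicFun_zero (hh : AnalyticAt ℂ h 0) (h0 : h 0 = 0) :
    deriv (bazilevicFun β h) 0 = (β + 1) * deriv h 0 := by
  rw [(hasDerivAt_bazilevicFun hh).deriv, h0]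
  simp only [mul_zero, exp_zero, zero_mul, add_zero, one_mul]
  ring

theorem iteratedDeriv_two_bazilevicFun_zero (hh : AnalyticAt ℂ h 0) (h0 : h 0 = 0) :
    iteratedDeriv 2 (bazilevicFun β h) 0 =
      (β + 2) * iteratedDeriv 2 h 0 + β * (β + 2) * deriv h 0 ^ 2 := by
  refine iteratedDeriv_two_eq_of_hasDerivAt
    (hh.eventually_analyticAt.mono fun z hz => hasDerivAt_bazilevicFun hz) ?_
  have hh' := hh.differentiableAt.hasDerivAt
  have hh'' := hh.deriv.differentiableAt.hasDerivAt
  have hh''' := hh.deriv.deriv.differentiableAt.hasDerivAt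
  have hE := (hh'.const_mul β).cexp
  have hu := ((hasDerivAt_id 0).fun_mul hh'').const_add 1
  have hv := ((hh''.const_mul β).fun_mul hu).fun_add hh'' |>.fun_add
    ((hasDerivAt_id 0).fun_mul hh''')
  refine (hE.fun_mul hv).congr_deriv ?_
  simp only [id, h0, mul_zero, exp_zero, iteratedDeriv_two]
  ring

end bazilevicFun

namespace BazilevicB1

variable {α : ℝ} {f h : ℂ → ℂ}

theorem hasDerivAt (hf : BazilevicB1 α f h) {z : ℂ} (hz : z ∈ ball (0 : ℂ) 1) :
    HasDerivAt f (bazilevicFun 1 h z) z := by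
  obtain ⟨-, hha, -, -, -, hfh, -⟩ := hf
  have hh := (hha z hz).differentiableAt.hasDerivAt
  have hfeq : f =ᶠ[𝓝 z] fun w => w * exp (h w) :=
    eventually_of_mem (isOpen_ball.mem_nhds hz) hfh
  refine (((hasDerivAt_id z).fun_mul hh.cexp).congr_of_eventuallyEq hfeq).congr_deriv ?_
  simp only [bazilevicFun, id, one_mul]
  ring

theorem coeff2_eq (hf : BazilevicB1 α f h) : coeff2 f = deriv h 0 := by
  have h0 : (0 : ℂ) ∈ ball (0 : ℂ) 1 := mem_ball_self one_pos
  have hh : AnalyticAt ℂ h 0 := hf.2.1 0 h0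
  have hq := (hasDerivAt_bazilevicFun (β := 1) hh).differentiableAt.hasDerivAt
  rw [deriv_bazilevicFun_zero hh hf.2.2.2.2.1] at hq
  rw [coeff2, iteratedDeriv_two_eq_of_hasDerivAt
    (eventually_of_mem (isOpen_ball.mem_nhds h0) fun z hz => hf.hasDerivAt hz) hq]
  ring

theorem re_bazilevicFun_pos (hf : BazilevicB1 α f h) {z : ℂ} (hz : z ∈ ball (0 : ℂ) 1) :
    0 < (bazilevicFun α h z).re := by
  have := hf.2.2.2.2.2.2 z hz
  rwa [(hf.hasDerivAt hz).deriv, bazilevicFun, ← mul_assoc, ← exp_add, ← add_mul,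
    sub_add_cancel] at this

end BazilevicB1

/-- For `α > 0` and `f ∈ B₁(α)` the stronger estimate
`|γ₂| - |γ₁| ≤ 1/(α+2) - (α/4)|a₂|² - (1/2)|a₂|` holds. -/
theorem stmt_8 (α : ℝ) (hα : 0 < α) (f h : ℂ → ℂ) (hf : BazilevicB1 α f h) :
    ‖logCoeff2 h‖ - ‖logCoeff1 h‖ ≤
      1 / (α + 2) - (α / 4) * ‖coeff2 f‖ ^ 2
        - (1 / 2) * ‖coeff2 f‖ := by
  have hh : AnalyticAt ℂ h 0 := hf.2.1 0 (mem_ball_self one_pos)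
  have h0 : h 0 = 0 := hf.2.2.2.2.1
  have hd : DifferentiableOn ℂ (bazilevicFun α h) (ball 0 1) := fun z hz =>
    (hasDerivAt_bazilevicFun (hf.2.1 z hz)).differentiableAt.differentiableWithinAt
  have key := norm_iteratedDeriv_two_sub_sq_le_of_re_pos hd (bazilevicFun_zero h0)
    fun z hz => hf.re_bazilevicFun_pos hz
  rw [iteratedDeriv_two_bazilevicFun_zero hh h0, deriv_bazilevicFun_zero hh h0] at key
  rw [hf.coeff2_eq, logCoeff1, logCoeff2, norm_div, norm_div, Complex.norm_two,
    show ‖(4 : ℂ)‖ = 4 from norm_ofNat 4]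
  set A := deriv h 0
  set B := iteratedDeriv 2 h 0
  have hnorm : ∀ c : ℝ, 0 ≤ c → ∀ w : ℂ, ‖(c : ℂ) * w‖ = c * ‖w‖ := fun c hc w => by
    rw [norm_mul, norm_real, Real.norm_of_nonneg hc]
  have hB : (α + 2) * ‖B‖ ≤ 4 - α * (α + 2) * ‖A‖ ^ 2 := by
    have htri := norm_sub_norm_le (((α + 2 : ℝ) : ℂ) * B) (A ^ 2)
    rw [hnorm _ (by positivity), norm_pow] at htri
    rw [show (α + 2 : ℂ) * B + α * (α + 2) * A ^ 2 - ((α + 1) * A) ^ 2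
        = ((α + 2 : ℝ) : ℂ) * B - A ^ 2 by push_cast; ring,
      show ((α : ℂ) + 1) * A = ((α + 1 : ℝ) : ℂ) * A by push_cast; ring,
      hnorm _ (by positivity)] at key
    nlinarith
  have hα2 : 0 < α + 2 := by positivity
  have : ‖B‖ / 4 ≤ 1 / (α + 2) - α / 4 * ‖A‖ ^ 2 := by
    rw [div_le_iff₀ four_pos, sub_mul, div_mul_eq_mul_div, one_mul, le_sub_iff_add_le,
      le_div_iff₀ hα2]
    nlinarith
  linarith
end
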